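/- For any Q ≥ 2, any fraction γ_i in F_Q, and any integer k ≥ 3, the matrix with rows (ν_{k-1}(γ_i), ν_k(γ_i)) and (ν_{k-2}(γ_{i+1}), ν_{k-1}(γ_{i+1})) has determinant 1; equivalently, ν_{k-1}(γ_i)·ν_{k-1}(γ_{i+1}) − ν_k(γ_i)·ν_{k-2}(γ_{i+1}) = 1. -/

import Mathlib

open MeasureTheory

/-- The Farey fractions of order `Q`, as a set of rationals in `(0,1]`
with denominator at most `Q` (rationals are automatically in lowest terms). -/
def fareySet (Q : ℕ) : Set ℚ := {x | 0 < x ∧ x ≤ 1 ∧ x.den ≤ Q}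

/-- `IsFarey Q N p q` asserts that `i ↦ p i / q i` (for `1 ≤ i ≤ N`) enumerates the
Farey fractions of order `Q` in increasing order, in lowest terms, extended to all
integer indices by the periodicity `γ_{i+N} = γ_i + 1`. -/
structure IsFarey (Q N : ℕ) (p q : ℤ → ℤ) : Prop where
  qpos : ∀ i : ℤ, 0 < q i
  coprime : ∀ i : ℤ, Int.gcd (p i) (q i) = 1
  mono : ∀ i j : ℤ, i < j → (p i : ℚ) / (q i) < (p j : ℚ) / (q j)
  mem : ∀ i : ℤ, 1 ≤ i → i ≤ (N : ℤ) → ((p i : ℚ) / (q i)) ∈ fareySet Q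
  surj : ∀ x ∈ fareySet Q, ∃ i : ℤ, 1 ≤ i ∧ i ≤ (N : ℤ) ∧ (p i : ℚ) / (q i) = x
  period_p : ∀ i : ℤ, p (i + N) = p i + q i
  period_q : ∀ i : ℤ, q (i + N) = q i

/-- The `k`-index `ν_k(γ_i) = p_{i+k-1} q_{i-1} - p_{i-1} q_{i+k-1}`. -/
def nuk (p q : ℤ → ℤ) (k : ℕ) (i : ℤ) : ℤ :=
  p (i + k - 1) * q (i - 1) - p (i - 1) * q (i + k - 1)

/-!
Writing `[a, b] = p_b q_a - p_a q_b`, we have `ν_k(γ_i) = [i - 1, i + k - 1]`, and the Plücker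
relation `[a, c] [b, d] - [a, d] [b, c] = [a, b] [c, d]` reduces the identity to `[j, j + 1] = 1`
for consecutive fractions. This is the classical neighbour property: extended periodically, the
sequence enumerates all rationals of denominator at most `Q`, and if `a / b` is one of them, the
solution `x / y` of `b x - a y = 1` with `Q - b < y ≤ Q` is its successor, since every fraction
strictly between `a / b` and `x / y` has denominator at least `b + y > Q`.
-/

theorem add_le_den_of_between {a b x y : ℤ} (hb : 0 < b) (hy : 0 < y)
    (hadj : b * x - a * y = 1) {r : ℚ} (har : a / b < r) (hrx : r < x / y) :
    b + y ≤ r.den := by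
  rw [← r.num_div_den, div_lt_div_iff₀ (by exact_mod_cast hb) (by exact_mod_cast r.den_pos)] at har
  rw [← r.num_div_den, div_lt_div_iff₀ (by exact_mod_cast r.den_pos) (by exact_mod_cast hy)] at hrx
  have hleft : a * r.den < r.num * b := mod_cast har
  have hright : r.num * y < x * r.den := mod_cast hrx
  have hden : (r.den : ℤ) = b * (x * r.den) - y * (a * r.den) := by
    linear_combination -(r.den : ℤ) * hadj
  nlinarith

theorem exists_mul_sub_mul_eq_one_of_isCoprime {a b : ℤ} (hb : 0 < b) (hab : IsCoprime a b)
    (Q : ℤ) : ∃ x y : ℤ, b * x - a * y = 1 ∧ Q < y + b ∧ y ≤ Q := by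
  obtain ⟨u, v, huv⟩ := hab
  have hdiv := Int.emod_add_mul_ediv (Q + u) b
  have := Int.emod_nonneg (Q + u) hb.ne'
  have := Int.emod_lt_of_pos (Q + u) hb
  refine ⟨v + a * ((Q + u) / b), b * ((Q + u) / b) - u, ?_, ?_, ?_⟩
  · linear_combination huv
  · linarith
  · linarith

theorem Rat.num_mul_den_sub_num_mul_den_eq_one {Q : ℕ} {r s : ℚ} (hr : r.den ≤ Q) (hs : s.den ≤ Q)
    (hrs : r < s) (hgap : ∀ u : ℚ, u.den ≤ Q → u ≤ r ∨ s ≤ u) :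
    s.num * r.den - r.num * s.den = 1 := by
  have hb : (0 : ℤ) < r.den := mod_cast r.den_pos
  obtain ⟨x, y, hadj, hQy, hyQ⟩ := exists_mul_sub_mul_eq_one_of_isCoprime hb
    (Int.isCoprime_iff_gcd_eq_one.mpr r.reduced) Q
  have hy : 0 < y := by omega
  have hxy : IsCoprime x y := ⟨r.den, -r.num, by linear_combination hadj⟩
  have hxy_num : ((x : ℚ) / y).num = x :=
    Rat.num_div_eq_of_coprime hy (Int.isCoprime_iff_gcd_eq_one.mp hxy)
  have hxy_den : (((x : ℚ) / y).den : ℤ) = y :=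
    Rat.den_div_eq_of_coprime hy (Int.isCoprime_iff_gcd_eq_one.mp hxy)
  have hrxy : r < x / y := by
    rw [← r.num_div_den, div_lt_div_iff₀ (by exact_mod_cast r.den_pos) (by exact_mod_cast hy)]
    exact_mod_cast (by linarith : r.num * y < x * r.den)
  have hs_eq : s = x / y := by
    rcases hgap (x / y) (by omega) with h | h
    · exact absurd hrxy h.not_gt
    refine h.antisymm (not_lt.mp fun hsxy => ?_)
    have := add_le_den_of_between hb hy hadj (by rwa [Int.cast_natCast, r.num_div_den]) hsxy
    omega
  rw [hs_eq, hxy_num, hxy_den]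
  linear_combination hadj

theorem Int.exists_eq_add_mul_of_pos {n : ℤ} (hn : 0 < n) (j : ℤ) :
    ∃ j₀ t : ℤ, 1 ≤ j₀ ∧ j₀ ≤ n ∧ j = j₀ + t * n := by
  have := Int.emod_add_mul_ediv (j - 1) n
  have := Int.emod_nonneg (j - 1) hn.ne'
  have := Int.emod_lt_of_pos (j - 1) hn
  exact ⟨(j - 1) % n + 1, (j - 1) / n, by omega, by omega, by linarith⟩

theorem nuk_plucker (p q : ℤ → ℤ) (k : ℕ) (i : ℤ) :
    nuk p q (k + 1) i * nuk p q (k + 1) (i + 1) - nuk p q (k + 2) i * nuk p q k (i + 1)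
      = nuk p q 1 i * nuk p q 1 (i + k + 1) := by
  simp only [nuk]
  push_cast
  ring_nf

namespace IsFarey

variable {Q N : ℕ} {p q : ℤ → ℤ}

theorem period_pos (hF : IsFarey Q N p q) : 0 < N := by
  by_contra h
  have := hF.period_p 0
  have := hF.qpos 0
  simp_all

theorem q_add_mul (hF : IsFarey Q N p q) (j t : ℤ) : q (j + t * N) = q j := by
  induction t using Int.induction_on with
  | zero => simp
  | succ t ih => rw [add_one_mul, ← add_assoc, hF.period_q, ih]
  | pred t ih => rw [← ih, ← hF.period_q]; ring_nf

theorem p_add_mul (hF : IsFarey Q N p q) (j t : ℤ) : p (j + t * N) = p j + t * q j := by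
  induction t using Int.induction_on with
  | zero => simp
  | succ t ih => rw [add_one_mul, ← add_assoc, hF.period_p, ih, hF.q_add_mul]; ring
  | pred t ih =>
    have h := hF.period_p (j + (-t - 1) * N)
    rw [hF.q_add_mul, show j + (-t - 1) * N + N = j + -t * N by ring, ih] at h
    linear_combination -h

theorem strictMono (hF : IsFarey Q N p q) : StrictMono fun i => (p i : ℚ) / q i :=
  fun _ _ => hF.mono _ _

theorem num_eq (hF : IsFarey Q N p q) (j : ℤ) : ((p j : ℚ) / q j).num = p j :=
  Rat.num_div_eq_of_coprime (hF.qpos j) (hF.coprime j)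

theorem den_eq (hF : IsFarey Q N p q) (j : ℤ) : (((p j : ℚ) / q j).den : ℤ) = q j :=
  Rat.den_div_eq_of_coprime (hF.qpos j) (hF.coprime j)

theorem den_le (hF : IsFarey Q N p q) (j : ℤ) : ((p j : ℚ) / q j).den ≤ Q := by
  obtain ⟨j₀, t, h₁, h₂, rfl⟩ := Int.exists_eq_add_mul_of_pos (n := N) (mod_cast hF.period_pos) j
  have hden : ((p (j₀ + t * N) : ℚ) / q (j₀ + t * N)).den = ((p j₀ : ℚ) / q j₀).den := by
    exact_mod_cast (hF.den_eq _).trans ((hF.q_add_mul j₀ t).trans (hF.den_eq j₀).symm)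
  exact hden ▸ (hF.mem j₀ h₁ h₂).2.2

theorem exists_eq_of_den_le (hF : IsFarey Q N p q) {r : ℚ} (hr : r.den ≤ Q) :
    ∃ m : ℤ, (p m : ℚ) / q m = r := by
  set t : ℤ := ⌈r⌉ - 1
  have hmem : r - t ∈ fareySet Q := by
    refine ⟨?_, ?_, by rwa [Rat.sub_intCast_den]⟩
    · have := Int.ceil_lt_add_one r
      push_cast [t]
      linarith
    · have := Int.le_ceil r
      push_cast [t]
      linarith
  obtain ⟨m₀, -, -, hm₀⟩ := hF.surj _ hmem
  refine ⟨m₀ + t * N, ?_⟩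
  have hq : (q m₀ : ℚ) ≠ 0 := by exact_mod_cast (hF.qpos m₀).ne'
  rw [hF.p_add_mul, hF.q_add_mul, Int.cast_add, Int.cast_mul, add_div, mul_div_cancel_right₀ _ hq,
    hm₀, sub_add_cancel]

theorem neighbor (hF : IsFarey Q N p q) (j : ℤ) : p (j + 1) * q j - p j * q (j + 1) = 1 := by
  have hgap : ∀ u : ℚ, u.den ≤ Q →
      u ≤ (p j : ℚ) / q j ∨ (p (j + 1) : ℚ) / q (j + 1) ≤ u := by
    intro u hu
    obtain ⟨m, rfl⟩ := hF.exists_eq_of_den_le hu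
    rcases le_or_gt m j with h | h
    · exact .inl (hF.strictMono.monotone h)
    · exact .inr (hF.strictMono.monotone (Int.add_one_le_of_lt h))
  have := Rat.num_mul_den_sub_num_mul_den_eq_one (hF.den_le j) (hF.den_le (j + 1))
    (hF.strictMono (lt_add_one j)) hgap
  rwa [hF.num_eq, hF.num_eq, hF.den_eq, hF.den_eq] at this

theorem nuk_one (hF : IsFarey Q N p q) (j : ℤ) : nuk p q 1 j = 1 := by
  have := hF.neighbor (j - 1)
  simp only [nuk, Nat.cast_one, add_sub_cancel_right, sub_add_cancel] at this ⊢
  exact this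

end IsFarey

theorem nuk_det_identity_general (Q N : ℕ) (p q : ℤ → ℤ)
    (hF : IsFarey Q N p q) (i : ℤ)
    (k : ℕ) (hk : 3 ≤ k) :
    nuk p q (k - 1) i * nuk p q (k - 1) (i + 1)
      - nuk p q k i * nuk p q (k - 2) (i + 1) = 1 := by
  obtain ⟨m, rfl⟩ : ∃ m, k = m + 2 := ⟨k - 2, by omega⟩
  rw [show m + 2 - 1 = m + 1 by omega, Nat.add_sub_cancel, nuk_plucker, hF.nuk_one, hF.nuk_one,
    mul_one]

/-- For `k ≥ 3`, `ν_{k-1}(γ_i) ν_{k-1}(γ_{i+1}) - ν_k(γ_i) ν_{k-2}(γ_{i+1}) = 1`;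
i.e. the matrix with rows `(ν_{k-1}(γ_i), ν_k(γ_i))`, `(ν_{k-2}(γ_{i+1}), ν_{k-1}(γ_{i+1}))`
has determinant one. -/
theorem nuk_det_identity (Q N : ℕ) (p q : ℤ → ℤ) (hQ : 2 ≤ Q)
    (hF : IsFarey Q N p q) (i : ℤ) (h1 : 1 ≤ i) (h2 : i ≤ (N : ℤ))
    (k : ℕ) (hk : 3 ≤ k) :
    nuk p q (k - 1) i * nuk p q (k - 1) (i + 1)
      - nuk p q k i * nuk p q (k - 2) (i + 1) = 1 :=
  nuk_det_identity_general Q N p q hF i k hk
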